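/- Assume Conditions 1 and 2 hold in every model of the sequence indexed by m. Then for any choice of minimizers (a*_m, B*_m) ∈ 𝓘_m, limsup_{m→∞} [ (1/m)·MSE_0^{(m)}(a*_m, B*_m) − (1/m)·Σ_{j=1}^m 𝔼 e_{t,j}² ] ≤ 0; i.e., (1/m)MSE_0^{(m)}(a*_m,B*_m) ≤ (1/m)Σ_{j=1}^m 𝔼 e_{t,j}² + o(1) as m → ∞. -/

import Mathlib

open MeasureTheory Filter Matrix

noncomputable section

namespace ODPCDFM

/-- Frobenius norm of a real matrix. -/
def frob {ι κ : Type*} [Fintype ι] [Fintype κ] (M : Matrix ι κ ℝ) : ℝ :=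
  Real.sqrt (∑ i, ∑ j, (M i j) ^ 2)

/-- Smallest eigenvalue of a symmetric real matrix, via the Rayleigh quotient. -/
def lambdaMin {n : ℕ} (M : Matrix (Fin n) (Fin n) ℝ) : ℝ :=
  ⨅ x : { x : EuclideanSpace ℝ (Fin n) // ‖x‖ = 1 }, ∑ i, ∑ j, x.1 i * M i j * x.1 j

/-- Largest eigenvalue of a symmetric real matrix, via the Rayleigh quotient. -/
def lambdaMax {n : ℕ} (M : Matrix (Fin n) (Fin n) ℝ) : ℝ :=
  ⨆ x : { x : EuclideanSpace ℝ (Fin n) // ‖x‖ = 1 }, ∑ i, ∑ j, x.1 i * M i j * x.1 j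

variable (k₁ k₂ : ℕ)

section PerModel

variable {Ω' : Type*} [MeasurableSpace Ω'] (m : ℕ)

/-- The common part `χ_t = B'𝐟_t` of the dynamic factor model, where the stacked
factor vector at time `t` is `𝐟_t = (f_t, …, f_{t-k₂})'` and the scalar factor
process is realized as `f_u = F ∘ τ^{u}`, time-shifted by `k₂` so that all the
needed lags of the factor are available at nonnegative times. -/
def commonPart (τ : Ω' → Ω') (F : Ω' → ℝ) (B : Matrix (Fin (k₂ + 1)) (Fin m) ℝ)
    (t : ℕ) (ω : Ω') : EuclideanSpace ℝ (Fin m) :=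
  (WithLp.equiv 2 (Fin m → ℝ)).symm fun j =>
    ∑ h : Fin (k₂ + 1), B h j * F (τ^[t + k₂ - h.1] ω)

/-- The observed process `z_t = B'𝐟_t + e_t`, with idiosyncratic process
`e_t = E ∘ τ^t`. -/
def zdfm (τ : Ω' → Ω') (F : Ω' → ℝ) (B : Matrix (Fin (k₂ + 1)) (Fin m) ℝ)
    (E : Ω' → EuclideanSpace ℝ (Fin m)) (t : ℕ) (ω : Ω') : EuclideanSpace ℝ (Fin m) :=
  (WithLp.equiv 2 (Fin m → ℝ)).symm fun j =>
    commonPart k₂ m τ F B t ω j + E (τ^[t] ω) j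

/-- The one-sided dynamic principal component `f_t(a) = a'x_t` of a process `z`,
where `x_t = (z_t', …, z_{t-k₁}')`. -/
def comp (z : ℕ → Ω' → EuclideanSpace ℝ (Fin m))
    (a : EuclideanSpace ℝ (Fin (k₁ + 1) × Fin m)) (t : ℕ) (ω : Ω') : ℝ :=
  ∑ h : Fin (k₁ + 1), ∑ j : Fin m, a (h, j) * z (t - h.1) ω j

/-- Reconstruction `z_t^R(a,B)` (no intercept). -/
def recon (z : ℕ → Ω' → EuclideanSpace ℝ (Fin m))
    (a : EuclideanSpace ℝ (Fin (k₁ + 1) × Fin m))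
    (Bc : Matrix (Fin (k₂ + 1)) (Fin m) ℝ) (t : ℕ) (ω : Ω') :
    EuclideanSpace ℝ (Fin m) :=
  (WithLp.equiv 2 (Fin m → ℝ)).symm fun j =>
    ∑ h : Fin (k₂ + 1), Bc h j * comp k₁ m z a (t - h.1) ω

/-- Population mean squared reconstruction error `MSE₀^{(m)}(a,B)`. -/
def MSE₀ (μ : Measure Ω') (z : ℕ → Ω' → EuclideanSpace ℝ (Fin m))
    (a : EuclideanSpace ℝ (Fin (k₁ + 1) × Fin m))
    (Bc : Matrix (Fin (k₂ + 1)) (Fin m) ℝ) : ℝ :=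
  ∫ ω, ‖z (k₁ + k₂) ω - recon k₁ k₂ m z a Bc (k₁ + k₂) ω‖ ^ 2 ∂μ

/-- Condition 1 for the process `z`. -/
def Condition1 (μ : Measure Ω') (z : ℕ → Ω' → EuclideanSpace ℝ (Fin m)) : Prop :=
  ∃ η : ℝ, η < 1 ∧
    ∀ a : EuclideanSpace ℝ (Fin (k₁ + 1) × Fin m), ‖a‖ = 1 →
      ∀ v : Fin (k₂ + 2) → ℝ, v ≠ 0 →
        (μ {ω | ∑ h : Fin (k₂ + 1),
            v h.castSucc * comp k₁ m z a (k₁ + k₂ - h.1) ω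
              = v (Fin.last (k₂ + 1))}).toReal ≤ η

/-- The set `𝓘_m` of minimizers of the population MSE. -/
def minimizers (μ : Measure Ω') (z : ℕ → Ω' → EuclideanSpace ℝ (Fin m)) :
    Set ((EuclideanSpace ℝ (Fin (k₁ + 1) × Fin m)) × Matrix (Fin (k₂ + 1)) (Fin m) ℝ) :=
  {p | ‖p.1‖ = 1 ∧ ∀ a Bc, ‖a‖ = 1 →
    MSE₀ k₁ k₂ m μ z p.1 p.2 ≤ MSE₀ k₁ k₂ m μ z a Bc}

/-- Lag-0 covariance matrix `Σᵉ(0)` of the (zero-mean) idiosyncratic part. -/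
def Sige (μ : Measure Ω') (E : Ω' → EuclideanSpace ℝ (Fin m)) :
    Matrix (Fin m) (Fin m) ℝ :=
  Matrix.of fun i j => ∫ ω, E ω i * E ω j ∂μ

end PerModel

/-!
For `m` large the Gram matrix `G = B Bᵀ` is invertible, and `w = Bᵀ G⁻¹ e₀` satisfies `B w = e₀`.
The one-sided component with loading `w` on the contemporaneous observation is then
`w'z_t = f_t + w'e_t`, so after rescaling the loadings the reconstruction error of this
candidate is `e_t - ∑_h B_h (w'e_{t-h})`: the factor cancels exactly. By minimality, the
inequality `(a + b)² ≤ (1 + ε) a² + (1 + ε⁻¹) b²` and stationarity,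
`MSE*/m ≤ (1 + ε) (1/m) ∑_j 𝔼 e_j² + (1 + ε⁻¹) (k₂ + 1) λ_max(Σᵉ) tr(G) G⁻¹₀₀ / m`.
The product `tr(G) G⁻¹₀₀` is invariant under scaling `G`, hence tends to `k₂ + 1` when
`G/m → I`, so the last term is `O(1/m)`; letting `m → ∞` and then `ε → 0` gives the claim.
-/

lemma bddAbove_rayleigh {n : ℕ} (M : Matrix (Fin n) (Fin n) ℝ) :
    BddAbove (Set.range fun x : { x : EuclideanSpace ℝ (Fin n) // ‖x‖ = 1 } =>
      ∑ i, ∑ j, x.1 i * M i j * x.1 j) := by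
  refine ⟨∑ i, ∑ j, |M i j|, ?_⟩
  rintro _ ⟨⟨x, hx⟩, rfl⟩
  have hcoord : ∀ i, |x i| ≤ 1 := fun i => hx ▸ PiLp.norm_apply_le x i
  dsimp only
  gcongr with i _ j _
  calc x i * M i j * x j ≤ |x i| * |M i j| * |x j| := by
        rw [← abs_mul, ← abs_mul]; exact le_abs_self _
    _ ≤ 1 * |M i j| * 1 := by gcongr <;> exact hcoord _
    _ = |M i j| := by ring

lemma quadForm_le_lambdaMax {n : ℕ} (M : Matrix (Fin n) (Fin n) ℝ)
    (x : EuclideanSpace ℝ (Fin n)) :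
    ∑ i, ∑ j, x i * M i j * x j ≤ lambdaMax M * ‖x‖ ^ 2 := by
  rcases eq_or_ne x 0 with rfl | hx
  · simp
  have hunit := le_ciSup (bddAbove_rayleigh M) ⟨‖x‖⁻¹ • x, norm_smul_inv_norm hx⟩
  have hscale : ∑ i, ∑ j, (‖x‖⁻¹ • x) i * M i j * (‖x‖⁻¹ • x) j
      = (‖x‖ ^ 2)⁻¹ * ∑ i, ∑ j, x i * M i j * x j := by
    simp only [PiLp.smul_apply, smul_eq_mul, Finset.mul_sum]
    exact Finset.sum_congr rfl fun i _ => Finset.sum_congr rfl fun j _ => by ring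
  have hx2 : ‖x‖ ^ 2 ≠ 0 := by positivity
  calc ∑ i, ∑ j, x i * M i j * x j
      = ‖x‖ ^ 2 * ((‖x‖ ^ 2)⁻¹ * ∑ i, ∑ j, x i * M i j * x j) :=
        (mul_inv_cancel_left₀ hx2 _).symm
    _ ≤ ‖x‖ ^ 2 * lambdaMax M := by gcongr; exact hscale ▸ hunit
    _ = lambdaMax M * ‖x‖ ^ 2 := mul_comm _ _

lemma diag_le_lambdaMax {n : ℕ} (M : Matrix (Fin n) (Fin n) ℝ) (i : Fin n) :
    M i i ≤ lambdaMax M := by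
  simpa [Pi.single_apply, ite_mul, mul_ite] using
    quadForm_le_lambdaMax M (EuclideanSpace.single i 1)

lemma add_sq_le_of_pos (a b : ℝ) {ε : ℝ} (hε : 0 < ε) :
    (a + b) ^ 2 ≤ (1 + ε) * a ^ 2 + (1 + ε⁻¹) * b ^ 2 := by
  have hnonneg : 0 ≤ (ε * a - b) ^ 2 * ε⁻¹ := by positivity
  have hexpand : (ε * a - b) ^ 2 * ε⁻¹ = ε * a ^ 2 + ε⁻¹ * b ^ 2 - 2 * a * b := by
    field_simp; ring
  nlinarith

lemma norm_sub_sum_smul_sq_le {V ι : Type*} [SeminormedAddCommGroup V] [NormedSpace ℝ V]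
    (s : Finset ι) (x : V) (y : ι → ℝ) (r : ι → V) {ε : ℝ} (hε : 0 < ε) :
    ‖x - ∑ i ∈ s, y i • r i‖ ^ 2 ≤
      (1 + ε) * ‖x‖ ^ 2 + (1 + ε⁻¹) * ((∑ i ∈ s, ‖r i‖ ^ 2) * ∑ i ∈ s, y i ^ 2) := by
  have hsum : ‖∑ i ∈ s, y i • r i‖ ≤ ∑ i ∈ s, ‖r i‖ * |y i| :=
    (norm_sum_le _ _).trans_eq <| Finset.sum_congr rfl fun i _ => by
      rw [norm_smul, Real.norm_eq_abs, mul_comm]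
  have hcs : (∑ i ∈ s, ‖r i‖ * |y i|) ^ 2 ≤ (∑ i ∈ s, ‖r i‖ ^ 2) * ∑ i ∈ s, y i ^ 2 := by
    simpa only [sq_abs] using Finset.sum_mul_sq_le_sq_mul_sq s (fun i => ‖r i‖) (fun i => |y i|)
  calc ‖x - ∑ i ∈ s, y i • r i‖ ^ 2 ≤ (‖x‖ + ∑ i ∈ s, ‖r i‖ * |y i|) ^ 2 := by
        gcongr
        exact (norm_sub_le _ _).trans (by gcongr)
    _ ≤ _ := (add_sq_le_of_pos _ _ hε).trans (by gcongr)

section RightInverse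

variable {ι κ : Type*} [Fintype ι] [Fintype κ] [DecidableEq ι]

lemma mulVec_transpose_mulVec_inv (B : Matrix ι κ ℝ) (hB : IsUnit (B * Bᵀ).det) (v : ι → ℝ) :
    B *ᵥ (Bᵀ *ᵥ ((B * Bᵀ)⁻¹ *ᵥ v)) = v := by
  rw [mulVec_mulVec, mulVec_mulVec, mul_nonsing_inv _ hB, one_mulVec]

lemma dotProduct_transpose_mulVec_inv_self (B : Matrix ι κ ℝ) (hB : IsUnit (B * Bᵀ).det)
    (v : ι → ℝ) :
    (Bᵀ *ᵥ ((B * Bᵀ)⁻¹ *ᵥ v)) ⬝ᵥ (Bᵀ *ᵥ ((B * Bᵀ)⁻¹ *ᵥ v)) = v ⬝ᵥ ((B * Bᵀ)⁻¹ *ᵥ v) := by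
  conv_lhs => rw [dotProduct_mulVec, vecMul_transpose, mulVec_transpose_mulVec_inv B hB]

lemma trace_mul_inv_apply_smul {M : Matrix ι ι ℝ} (hM : IsUnit M.det) {c : ℝ} (hc : c ≠ 0)
    (i : ι) : (c • M).trace * (c • M)⁻¹ i i = M.trace * M⁻¹ i i := by
  have := invertibleOfNonzero hc
  simp only [Matrix.inv_smul M c hM, trace_smul, Matrix.smul_apply, invOf_eq_inv, smul_eq_mul]
  field_simp

end RightInverse

lemma continuousAt_trace_mul_inv_apply {n : ℕ} (i : Fin n) :
    ContinuousAt (fun M : Matrix (Fin n) (Fin n) ℝ => M.trace * M⁻¹ i i) 1 := by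
  have hinv : ContinuousAt Inv.inv (1 : Matrix (Fin n) (Fin n) ℝ) :=
    continuousAt_matrix_inv _ (by simp [Ring.inverse_eq_inv', continuousAt_inv₀ one_ne_zero])
  exact (continuous_id.matrix_trace.continuousAt).mul
    ((continuous_apply_apply i i).continuousAt.comp hinv)

section Reconstruction

variable {Ω : Type*} {m : ℕ}

def lagZeroLoading (w : Fin m → ℝ) : EuclideanSpace ℝ (Fin (k₁ + 1) × Fin m) :=
  WithLp.toLp 2 fun p => if p.1 = 0 then w p.2 else 0

lemma lagZeroLoading_ne_zero {w : Fin m → ℝ} (hw : w ≠ 0) : lagZeroLoading k₁ w ≠ 0 := by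
  obtain ⟨j, hj⟩ := Function.ne_iff.1 hw
  intro h
  exact hj (by simpa [lagZeroLoading] using congrArg (fun a => a (0, j)) h)

lemma comp_lagZeroLoading (z : ℕ → Ω → EuclideanSpace ℝ (Fin m)) (w : Fin m → ℝ) (s : ℕ)
    (ω : Ω) : comp k₁ m z (lagZeroLoading k₁ w) s ω = ∑ j, w j * z s ω j := by
  simp [comp, lagZeroLoading]

lemma recon_inv_smul_smul (z : ℕ → Ω → EuclideanSpace ℝ (Fin m))
    (a : EuclideanSpace ℝ (Fin (k₁ + 1) × Fin m)) (Bc : Matrix (Fin (k₂ + 1)) (Fin m) ℝ)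
    {c : ℝ} (hc : c ≠ 0) :
    recon k₁ k₂ m z (c⁻¹ • a) (c • Bc) = recon k₁ k₂ m z a Bc := by
  funext t ω
  ext j
  simp only [recon, comp, PiLp.smul_apply, smul_eq_mul, Matrix.smul_apply, WithLp.equiv_symm_apply]
  refine Finset.sum_congr rfl fun h _ => ?_
  simp only [mul_assoc, ← Finset.mul_sum]
  field_simp

lemma sum_mul_zdfm_apply (τ : Ω → Ω) (F : Ω → ℝ) {B : Matrix (Fin (k₂ + 1)) (Fin m) ℝ}
    (E : Ω → EuclideanSpace ℝ (Fin m)) {w : Fin m → ℝ} (hBw : B *ᵥ w = Pi.single 0 1)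
    (s : ℕ) (ω : Ω) :
    ∑ j, w j * zdfm k₂ m τ F B E s ω j = F (τ^[s + k₂] ω) + ∑ j, w j * E (τ^[s] ω) j := by
  have hfactor : ∑ j, w j * ∑ h : Fin (k₂ + 1), B h j * F (τ^[s + k₂ - h] ω)
      = ∑ h : Fin (k₂ + 1), (B *ᵥ w) h * F (τ^[s + k₂ - h] ω) := by
    simp only [Finset.mul_sum, mulVec, dotProduct, Finset.sum_mul]
    rw [Finset.sum_comm]
    exact Finset.sum_congr rfl fun h _ => Finset.sum_congr rfl fun j _ => by ring
  simp only [zdfm, commonPart, WithLp.equiv_symm_apply, mul_add, Finset.sum_add_distrib, hfactor,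
    hBw]
  simp [Pi.single_apply]

lemma zdfm_sub_recon_lagZeroLoading (τ : Ω → Ω) (F : Ω → ℝ)
    {B : Matrix (Fin (k₂ + 1)) (Fin m) ℝ} (E : Ω → EuclideanSpace ℝ (Fin m)) {w : Fin m → ℝ}
    (hBw : B *ᵥ w = Pi.single 0 1) {t : ℕ} (ht : k₂ ≤ t) (ω : Ω) :
    zdfm k₂ m τ F B E t ω - recon k₁ k₂ m (zdfm k₂ m τ F B E) (lagZeroLoading k₁ w) B t ω
      = E (τ^[t] ω) - ∑ h : Fin (k₂ + 1),
          (∑ j, w j * E (τ^[t - h] ω) j) • WithLp.toLp 2 (B h) := by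
  ext j
  have hlag : ∀ h : Fin (k₂ + 1), t - h + k₂ = t + k₂ - h := fun h => by omega
  simp only [PiLp.sub_apply, recon, WithLp.equiv_symm_apply, comp_lagZeroLoading,
    sum_mul_zdfm_apply k₂ τ F E hBw, hlag]
  simp only [zdfm, commonPart, WithLp.equiv_symm_apply, mul_add, Finset.sum_add_distrib,
    WithLp.ofLp_sum, WithLp.ofLp_smul, Finset.sum_apply, Pi.smul_apply, smul_eq_mul]
  simp only [mul_comm (B _ j)]
  ring

end Reconstruction

section Moments

variable {Ω : Type*} [MeasurableSpace Ω] {μ : Measure Ω} {m : ℕ}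

lemma integral_comp_measurePreserving {Ω' G : Type*} [MeasurableSpace Ω']
    [NormedAddCommGroup G] [NormedSpace ℝ G] {ν : Measure Ω'} {T : Ω → Ω'}
    (hT : MeasurePreserving T μ ν) {g : Ω' → G} (hg : AEStronglyMeasurable g ν) :
    ∫ ω, g (T ω) ∂μ = ∫ ω', g ω' ∂ν := by
  rw [← integral_map hT.aemeasurable (hT.map_eq ▸ hg), hT.map_eq]

lemma memLp_apply {E : Ω → EuclideanSpace ℝ (Fin m)} (hE : MemLp E 2 μ) (j : Fin m) :
    MemLp (fun ω => E ω j) 2 μ :=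
  (EuclideanSpace.proj (𝕜 := ℝ) j).comp_memLp' hE

lemma integral_norm_sq_eq_sum {E : Ω → EuclideanSpace ℝ (Fin m)} (hE : MemLp E 2 μ) :
    ∫ ω, ‖E ω‖ ^ 2 ∂μ = ∑ j, ∫ ω, (E ω j) ^ 2 ∂μ := by
  simp_rw [EuclideanSpace.real_norm_sq_eq]
  exact integral_finsetSum _ fun j _ => (memLp_apply hE j).integrable_sq

lemma integral_sq_sum_mul_eq {E : Ω → EuclideanSpace ℝ (Fin m)} (hE : MemLp E 2 μ)
    (w : Fin m → ℝ) :
    ∫ ω, (∑ j, w j * E ω j) ^ 2 ∂μ = ∑ i, ∑ j, w i * Sige m μ E i j * w j := by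
  have hprod : ∀ i j, Integrable (fun ω => E ω i * E ω j) μ := fun i j =>
    (memLp_apply hE i).integrable_mul (memLp_apply hE j)
  have hexpand : ∀ ω, (∑ j, w j * E ω j) ^ 2 = ∑ i, ∑ j, w i * w j * (E ω i * E ω j) := by
    intro ω
    rw [sq, Finset.sum_mul_sum]
    exact Finset.sum_congr rfl fun i _ => Finset.sum_congr rfl fun j _ => by ring
  simp_rw [hexpand]
  rw [integral_finsetSum _ fun i _ => integrable_finsetSum _ fun j _ => (hprod i j).const_mul _]
  refine Finset.sum_congr rfl fun i _ => ?_
  rw [integral_finsetSum _ fun j _ => (hprod i j).const_mul _]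
  refine Finset.sum_congr rfl fun j _ => ?_
  rw [integral_const_mul, Sige, of_apply]
  ring

lemma integral_sq_sum_mul_le {E : Ω → EuclideanSpace ℝ (Fin m)} (hE : MemLp E 2 μ)
    (w : Fin m → ℝ) {C : ℝ} (hC : lambdaMax (Sige m μ E) ≤ C) :
    ∫ ω, (∑ j, w j * E ω j) ^ 2 ∂μ ≤ C * (w ⬝ᵥ w) := by
  have hw : ‖WithLp.toLp 2 w‖ ^ 2 = w ⬝ᵥ w := by
    rw [EuclideanSpace.real_norm_sq_eq]
    simp [dotProduct, sq]
  rw [integral_sq_sum_mul_eq hE, ← hw]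
  exact (quadForm_le_lambdaMax _ (WithLp.toLp 2 w)).trans (by gcongr)

lemma sum_integral_sq_le (E : Ω → EuclideanSpace ℝ (Fin m)) {C : ℝ}
    (hC : lambdaMax (Sige m μ E) ≤ C) :
    ∑ j, ∫ ω, (E ω j) ^ 2 ∂μ ≤ m * C := by
  calc ∑ j, ∫ ω, (E ω j) ^ 2 ∂μ = ∑ j, Sige m μ E j j := by simp [Sige, sq]
    _ ≤ ∑ _j : Fin m, C := Finset.sum_le_sum fun j _ => (diag_le_lambdaMax _ j).trans hC
    _ = m * C := by simp

end Moments

section MSEBound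

variable {Ω : Type*} [MeasurableSpace Ω] {μ : Measure Ω} {m : ℕ}

lemma sum_norm_sq_rows_eq_trace (B : Matrix (Fin (k₂ + 1)) (Fin m) ℝ) :
    ∑ h, ‖WithLp.toLp 2 (B h)‖ ^ 2 = (B * Bᵀ).trace := by
  simp_rw [EuclideanSpace.real_norm_sq_eq]
  simp [trace, mul_apply, sq]

lemma MSE₀_lagZeroLoading_le {τ : Ω → Ω} (hτ : MeasurePreserving τ μ μ) (F : Ω → ℝ)
    {B : Matrix (Fin (k₂ + 1)) (Fin m) ℝ} {E : Ω → EuclideanSpace ℝ (Fin m)} (hE : MemLp E 2 μ)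
    {w : Fin m → ℝ} (hBw : B *ᵥ w = Pi.single 0 1) {C : ℝ} (hC : lambdaMax (Sige m μ E) ≤ C)
    {ε : ℝ} (hε : 0 < ε) :
    MSE₀ k₁ k₂ m μ (zdfm k₂ m τ F B E) (lagZeroLoading k₁ w) B ≤
      (1 + ε) * ∑ j, ∫ ω, (E ω j) ^ 2 ∂μ +
        (1 + ε⁻¹) * ((B * Bᵀ).trace * ((k₂ + 1) * (C * (w ⬝ᵥ w)))) := by
  set t := k₁ + k₂
  set Y : Ω → ℝ := fun ω => ∑ j, w j * E ω j
  have hY : MemLp Y 2 μ := memLp_finsetSum _ fun j _ => (memLp_apply hE j).const_mul (w j)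
  have hYs : ∀ s, MemLp (fun ω => Y (τ^[s] ω)) 2 μ := fun s =>
    hY.comp_measurePreserving (hτ.iterate s)
  have hEt : MemLp (fun ω => E (τ^[t] ω)) 2 μ := hE.comp_measurePreserving (hτ.iterate t)
  set g : Ω → ℝ := fun ω => (1 + ε) * ‖E (τ^[t] ω)‖ ^ 2 +
    (1 + ε⁻¹) * ((B * Bᵀ).trace * ∑ h : Fin (k₂ + 1), Y (τ^[t - h] ω) ^ 2)
  have hpointwise : ∀ ω, ‖zdfm k₂ m τ F B E t ω -
      recon k₁ k₂ m (zdfm k₂ m τ F B E) (lagZeroLoading k₁ w) B t ω‖ ^ 2 ≤ g ω := by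
    intro ω
    rw [zdfm_sub_recon_lagZeroLoading k₁ k₂ τ F E hBw (Nat.le_add_left k₂ k₁)]
    have := norm_sub_sum_smul_sq_le Finset.univ (E (τ^[t] ω))
      (fun h : Fin (k₂ + 1) => Y (τ^[t - h] ω)) (fun h => WithLp.toLp 2 (B h)) hε
    rwa [sum_norm_sq_rows_eq_trace] at this
  have hEt2 : Integrable (fun ω => ‖E (τ^[t] ω)‖ ^ 2) μ := hEt.integrable_norm_pow two_ne_zero
  have hYs2 : Integrable (fun ω => ∑ h : Fin (k₂ + 1), Y (τ^[t - h] ω) ^ 2) μ :=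
    integrable_finsetSum _ fun h _ => (hYs _).integrable_sq
  have hg : Integrable g μ := (hEt2.const_mul _).add ((hYs2.const_mul _).const_mul _)
  have hstationary : ∀ s, ∫ ω, Y (τ^[s] ω) ^ 2 ∂μ = ∫ ω, Y ω ^ 2 ∂μ := fun s =>
    integral_comp_measurePreserving (hτ.iterate s) hY.integrable_sq.aestronglyMeasurable
  have htrace : 0 ≤ (B * Bᵀ).trace := sum_norm_sq_rows_eq_trace k₂ B ▸ by positivity
  calc MSE₀ k₁ k₂ m μ (zdfm k₂ m τ F B E) (lagZeroLoading k₁ w) B ≤ ∫ ω, g ω ∂μ :=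
        integral_mono_of_nonneg (ae_of_all _ fun _ => by positivity) hg (ae_of_all _ hpointwise)
    _ = (1 + ε) * ∑ j, ∫ ω, (E ω j) ^ 2 ∂μ +
          (1 + ε⁻¹) * ((B * Bᵀ).trace * ((k₂ + 1) * ∫ ω, Y ω ^ 2 ∂μ)) := by
        rw [integral_add (hEt2.const_mul _) ((hYs2.const_mul _).const_mul _),
          integral_const_mul, integral_const_mul, integral_const_mul,
          integral_finsetSum _ fun h _ => (hYs _).integrable_sq,
          integral_comp_measurePreserving (hτ.iterate t)
            (hE.integrable_norm_pow two_ne_zero).aestronglyMeasurable,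
          integral_norm_sq_eq_sum hE]
        simp [hstationary]
    _ ≤ _ := by gcongr; exact integral_sq_sum_mul_le hE w hC

end MSEBound

section Minimizers

variable {Ω : Type*} [MeasurableSpace Ω] {μ : Measure Ω} {m : ℕ}

lemma MSE₀_minimizer_le {τ : Ω → Ω} (hτ : MeasurePreserving τ μ μ) (F : Ω → ℝ)
    {B : Matrix (Fin (k₂ + 1)) (Fin m) ℝ} {E : Ω → EuclideanSpace ℝ (Fin m)} (hE : MemLp E 2 μ)
    (hB : IsUnit (B * Bᵀ).det) {C : ℝ} (hC : lambdaMax (Sige m μ E) ≤ C)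
    {p : EuclideanSpace ℝ (Fin (k₁ + 1) × Fin m) × Matrix (Fin (k₂ + 1)) (Fin m) ℝ}
    (hp : p ∈ minimizers k₁ k₂ m μ (zdfm k₂ m τ F B E)) {ε : ℝ} (hε : 0 < ε) :
    MSE₀ k₁ k₂ m μ (zdfm k₂ m τ F B E) p.1 p.2 ≤
      (1 + ε) * ∑ j, ∫ ω, (E ω j) ^ 2 ∂μ +
        (1 + ε⁻¹) * ((k₂ + 1) * C * ((B * Bᵀ).trace * (B * Bᵀ)⁻¹ 0 0)) := by
  set w := Bᵀ *ᵥ ((B * Bᵀ)⁻¹ *ᵥ Pi.single 0 1)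
  have hBw : B *ᵥ w = Pi.single 0 1 := mulVec_transpose_mulVec_inv B hB _
  have hww : w ⬝ᵥ w = (B * Bᵀ)⁻¹ 0 0 := by
    rw [dotProduct_transpose_mulVec_inv_self B hB]
    simp
  have hw : w ≠ 0 := by
    rintro h
    simpa [h] using congrFun hBw 0
  set a := lagZeroLoading k₁ w
  have ha : ‖a‖ ≠ 0 := norm_ne_zero_iff.2 (lagZeroLoading_ne_zero k₁ hw)
  calc MSE₀ k₁ k₂ m μ (zdfm k₂ m τ F B E) p.1 p.2
      ≤ MSE₀ k₁ k₂ m μ (zdfm k₂ m τ F B E) (‖a‖⁻¹ • a) (‖a‖ • B) :=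
        hp.2 _ _ (norm_smul_inv_norm (norm_ne_zero_iff.1 ha))
    _ = MSE₀ k₁ k₂ m μ (zdfm k₂ m τ F B E) a B := by
        simp only [MSE₀, recon_inv_smul_smul _ _ _ _ _ ha]
    _ ≤ _ := MSE₀_lagZeroLoading_le k₁ k₂ hτ F hE hBw hC hε
    _ = _ := by rw [hww]; ring

end Minimizers

lemma eventually_isUnit_det_of_tendsto_one {α ι : Type*} [Fintype ι] [DecidableEq ι]
    {l : Filter α} {A : α → Matrix ι ι ℝ} (hA : Tendsto A l (nhds 1)) :
    ∀ᶠ x in l, IsUnit (A x).det := by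
  have hdet : Tendsto (fun x => (A x).det) l (nhds 1) := by
    simpa [Function.comp_def] using (continuous_id.matrix_det.tendsto 1).comp hA
  filter_upwards [hdet.eventually_ne one_ne_zero] with x hx
  exact isUnit_iff_ne_zero.2 hx

lemma limsup_nonpos_of_le_mul_add {u r : ℕ → ℝ} {C : ℝ}
    (hu : IsCoboundedUnder (· ≤ ·) atTop u) (hr : Tendsto r atTop (nhds 0))
    (h : ∀ ε > 0, ∀ᶠ m in atTop, u m ≤ ε * C + (1 + ε⁻¹) * r m) :
    limsup u atTop ≤ 0 := by
  have hεC : Tendsto (fun ε : ℝ => ε * C) (nhdsWithin 0 (Set.Ioi 0)) (nhds 0) := by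
    simpa using ((continuous_mul_const C).tendsto 0).mono_left nhdsWithin_le_nhds
  refine ge_of_tendsto hεC ?_
  filter_upwards [self_mem_nhdsWithin] with ε hε
  have hv : Tendsto (fun m => ε * C + (1 + ε⁻¹) * r m) atTop (nhds (ε * C)) := by
    simpa using tendsto_const_nhds.add (hr.const_mul (1 + ε⁻¹))
  exact (limsup_le_limsup (h ε hε) hu hv.isBoundedUnder_le).trans hv.limsup_eq.le

section Normalized

variable {Ω : Type*} [MeasurableSpace Ω] {μ : Measure Ω} {m : ℕ}

lemma inv_mul_sum_integral_sq_le (hm : 0 < m) (E : Ω → EuclideanSpace ℝ (Fin m)) {C : ℝ}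
    (hC : lambdaMax (Sige m μ E) ≤ C) :
    (m : ℝ)⁻¹ * ∑ j, ∫ ω, (E ω j) ^ 2 ∂μ ≤ C := by
  rw [inv_mul_le_iff₀ (by exact_mod_cast hm)]
  exact sum_integral_sq_le E hC

lemma inv_mul_MSE₀_minimizer_sub_le (hm : 0 < m) {τ : Ω → Ω} (hτ : MeasurePreserving τ μ μ)
    (F : Ω → ℝ) {B : Matrix (Fin (k₂ + 1)) (Fin m) ℝ} {E : Ω → EuclideanSpace ℝ (Fin m)}
    (hE : MemLp E 2 μ) (hB : IsUnit ((m : ℝ)⁻¹ • (B * Bᵀ)).det) {C : ℝ}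
    (hC : lambdaMax (Sige m μ E) ≤ C)
    {p : EuclideanSpace ℝ (Fin (k₁ + 1) × Fin m) × Matrix (Fin (k₂ + 1)) (Fin m) ℝ}
    (hp : p ∈ minimizers k₁ k₂ m μ (zdfm k₂ m τ F B E)) {ε : ℝ} (hε : 0 < ε) :
    (m : ℝ)⁻¹ * MSE₀ k₁ k₂ m μ (zdfm k₂ m τ F B E) p.1 p.2 -
        (m : ℝ)⁻¹ * ∑ j, ∫ ω, (E ω j) ^ 2 ∂μ ≤
      ε * C + (1 + ε⁻¹) * ((k₂ + 1) * C *
        (((m : ℝ)⁻¹ • (B * Bᵀ)).trace * ((m : ℝ)⁻¹ • (B * Bᵀ))⁻¹ 0 0 * (m : ℝ)⁻¹)) := by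
  have hm' : (m : ℝ)⁻¹ ≠ 0 := inv_ne_zero (by exact_mod_cast hm.ne')
  have hG : IsUnit (B * Bᵀ).det := by
    rw [det_smul, isUnit_iff_ne_zero] at hB
    exact isUnit_iff_ne_zero.2 (right_ne_zero_of_mul hB)
  rw [trace_mul_inv_apply_smul hG hm']
  calc (m : ℝ)⁻¹ * MSE₀ k₁ k₂ m μ (zdfm k₂ m τ F B E) p.1 p.2 -
        (m : ℝ)⁻¹ * ∑ j, ∫ ω, (E ω j) ^ 2 ∂μ
      ≤ (m : ℝ)⁻¹ * ((1 + ε) * ∑ j, ∫ ω, (E ω j) ^ 2 ∂μ +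
          (1 + ε⁻¹) * ((k₂ + 1) * C * ((B * Bᵀ).trace * (B * Bᵀ)⁻¹ 0 0))) -
        (m : ℝ)⁻¹ * ∑ j, ∫ ω, (E ω j) ^ 2 ∂μ := by
        gcongr
        exact MSE₀_minimizer_le k₁ k₂ hτ F hE hG hC hp hε
    _ = ε * ((m : ℝ)⁻¹ * ∑ j, ∫ ω, (E ω j) ^ 2 ∂μ) +
          (1 + ε⁻¹) * ((k₂ + 1) * C * ((B * Bᵀ).trace * (B * Bᵀ)⁻¹ 0 0 * (m : ℝ)⁻¹)) := by
        ring
    _ ≤ _ := by gcongr; exact inv_mul_sum_integral_sq_le hm E hC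

lemma neg_le_inv_mul_MSE₀_sub (hm : 0 < m) (z : ℕ → Ω → EuclideanSpace ℝ (Fin m))
    {E : Ω → EuclideanSpace ℝ (Fin m)} {C : ℝ} (hC : lambdaMax (Sige m μ E) ≤ C)
    (a : EuclideanSpace ℝ (Fin (k₁ + 1) × Fin m)) (Bc : Matrix (Fin (k₂ + 1)) (Fin m) ℝ) :
    -C ≤ (m : ℝ)⁻¹ * MSE₀ k₁ k₂ m μ z a Bc - (m : ℝ)⁻¹ * ∑ j, ∫ ω, (E ω j) ^ 2 ∂μ := by
  have hMSE : 0 ≤ (m : ℝ)⁻¹ * MSE₀ k₁ k₂ m μ z a Bc :=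
    mul_nonneg (by positivity) (integral_nonneg fun _ => by positivity)
  linarith [inv_mul_sum_integral_sq_le hm E hC]

end Normalized

theorem stmt3
    (Ω : ℕ → Type*) [∀ m, MeasurableSpace (Ω m)]
    (μ : ∀ m, Measure (Ω m))
    (τ : ∀ m, Ω m → Ω m) (hτ : ∀ m, MeasurePreserving (τ m) (μ m) (μ m))
    (F : ∀ m, Ω m → ℝ)
    (B : ∀ m, Matrix (Fin (k₂ + 1)) (Fin m) ℝ)
    (E : ∀ m, Ω m → EuclideanSpace ℝ (Fin m)) (hE : ∀ m, MemLp (E m) 2 (μ m))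
    (h2a : Tendsto (fun m : ℕ => (m : ℝ)⁻¹ • (B m * (B m)ᵀ)) atTop
      (nhds (1 : Matrix (Fin (k₂ + 1)) (Fin (k₂ + 1)) ℝ)))
    (h2b : ∃ C : ℝ, ∀ m, lambdaMax (Sige m (μ m) (E m)) ≤ C)
    (astar : ∀ m, EuclideanSpace ℝ (Fin (k₁ + 1) × Fin m))
    (Bstar : ∀ m, Matrix (Fin (k₂ + 1)) (Fin m) ℝ)
    (hstar : ∀ m, (astar m, Bstar m) ∈
      minimizers k₁ k₂ m (μ m) (zdfm k₂ m (τ m) (F m) (B m) (E m))) :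
    limsup (fun m : ℕ =>
      (m : ℝ)⁻¹ * MSE₀ k₁ k₂ m (μ m) (zdfm k₂ m (τ m) (F m) (B m) (E m))
          (astar m) (Bstar m)
        - (m : ℝ)⁻¹ * ∑ j : Fin m, ∫ ω, (E m ω j) ^ 2 ∂(μ m)) atTop ≤ 0 := by
  obtain ⟨C, hC⟩ := h2b
  have hratio := ((continuousAt_trace_mul_inv_apply 0).tendsto.comp h2a).mul
    tendsto_inv_atTop_nhds_zero_nat
  refine limsup_nonpos_of_le_mul_add (C := C) ?_
    (by simpa only [mul_zero] using hratio.const_mul ((k₂ + 1) * C)) fun ε hε => ?_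
  · refine isCoboundedUnder_le_of_eventually_le atTop (x := -C) ?_
    filter_upwards [eventually_gt_atTop 0] with m hm
    exact neg_le_inv_mul_MSE₀_sub k₁ k₂ hm (zdfm k₂ m (τ m) (F m) (B m) (E m)) (hC m) _ _
  · filter_upwards [eventually_gt_atTop 0, eventually_isUnit_det_of_tendsto_one h2a] with m hm hB
    exact inv_mul_MSE₀_minimizer_sub_le k₁ k₂ hm (hτ m) (F m) (hE m) hB (hC m) (hstar m) hε

end ODPCDFM
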